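/- Let p ∈ [1, 2), α₀ ∈ (p, 2), and suppose σ² ≥ exp(1 + 2/p - log α₀ - ψ(1 - p/α₀)), where ψ is the digamma function. Then the function Λ(α) = (1/α)·(1/(α·σ²))^(p/α)·Γ(1 - p/α) is monotonically increasing on [α₀, 2), i.e., for α₀ ≤ α₁ < α₂ < 2 we have Λ(α₁) ≤ Λ(α₂). -/

import Mathlib

noncomputable def digamma (x : ℝ) : ℝ := deriv (fun y => Real.log (Real.Gamma y)) x

/-!
Write `Λ = exp ∘ L` with `L α = -log α - (p/α) log(α s) + log Γ(1 - p/α)`, `s = σ²`. Then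
`L' α = (p/α²) (log(α s) - 1 + ψ(1 - p/α)) - 1/α`, which is nonnegative as soon as
`log s ≥ 1 + α/p - log α - ψ(1 - p/α)`. Since `ψ` is increasing (log-convexity of `Γ`), the
right-hand side is bounded on `[α₀, β]` by its value `1 + β/p - log α₀ - ψ(1 - p/α₀)`, so the
hypothesis with `β = 2` makes `L`, hence `Λ`, monotone.
-/

open Real Set

lemma differentiableAt_log_Gamma {x : ℝ} (hx : 0 < x) :
    DifferentiableAt ℝ (fun y => log (Gamma y)) x := by
  refine (differentiableAt_Gamma fun m => ?_).log (Gamma_pos_of_pos hx).ne'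
  exact ((neg_nonpos.mpr (Nat.cast_nonneg m)).trans_lt hx).ne'

lemma digamma_monotoneOn : MonotoneOn digamma (Ioi 0) :=
  convexOn_log_Gamma.monotoneOn_deriv fun _ hx => differentiableAt_log_Gamma hx

lemma one_sub_div_pos {p α : ℝ} (hα : 0 < α) (hpα : p < α) : 0 < 1 - p / α := by
  rw [sub_pos, div_lt_one hα]
  exact hpα

noncomputable def logLambda (p s α : ℝ) : ℝ :=
  -log α - p / α * log (α * s) + log (Gamma (1 - p / α))

lemma exp_logLambda {p s α : ℝ} (hs : 0 < s) (hα : 0 < α) (hpα : p < α) :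
    exp (logLambda p s α) = 1 / α * (1 / (α * s)) ^ (p / α) * Gamma (1 - p / α) := by
  have hΓ : 0 < Gamma (1 - p / α) := Gamma_pos_of_pos (one_sub_div_pos hα hpα)
  have hrpow : (1 / (α * s)) ^ (p / α) = exp (-(p / α * log (α * s))) := by
    rw [rpow_def_of_pos (by positivity), one_div, log_inv]
    ring_nf
  rw [logLambda, exp_add, sub_eq_add_neg, exp_add, exp_neg, exp_log hΓ, exp_log hα, hrpow,
    one_div]

lemma hasDerivAt_logLambda {p s α : ℝ} (hs : 0 < s) (hα : 0 < α) (hpα : p < α) :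
    HasDerivAt (logLambda p s)
      (p / α ^ 2 * (log (α * s) - 1 + digamma (1 - p / α)) - α⁻¹) α := by
  have hinv : HasDerivAt (fun α : ℝ => p / α) (-(p / α ^ 2)) α := by
    simpa [div_eq_mul_inv, neg_div] using (hasDerivAt_inv hα.ne').const_mul p
  have hlog : HasDerivAt (fun α : ℝ => log (α * s)) α⁻¹ α := by
    convert ((hasDerivAt_id' α).mul_const s).log (by positivity) using 1
    field_simp
  have hlogGamma : HasDerivAt (fun α : ℝ => log (Gamma (1 - p / α)))
      (digamma (1 - p / α) * (p / α ^ 2)) α := by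
    have hΓ : HasDerivAt (fun y => log (Gamma y)) (digamma (1 - p / α)) (1 - p / α) :=
      (differentiableAt_log_Gamma (one_sub_div_pos hα hpα)).hasDerivAt
    exact (hΓ.comp α (hinv.const_sub 1)).congr_deriv (by rw [neg_neg])
  refine (((hasDerivAt_log hα.ne').neg.sub (hinv.mul hlog)).add hlogGamma).congr_deriv ?_
  field_simp
  ring

lemma logLambda_deriv_nonneg {p s α₀ β α : ℝ} (hp : 0 < p) (hs : 0 < s) (hpα₀ : p < α₀)
    (hs_large : 1 + β / p - log α₀ - digamma (1 - p / α₀) ≤ log s) (hα₀α : α₀ ≤ α)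
    (hαβ : α ≤ β) :
    0 ≤ p / α ^ 2 * (log (α * s) - 1 + digamma (1 - p / α)) - α⁻¹ := by
  have hα₀ : 0 < α₀ := hp.trans hpα₀
  have hα : 0 < α := hα₀.trans_le hα₀α
  have hdigamma : digamma (1 - p / α₀) ≤ digamma (1 - p / α) :=
    digamma_monotoneOn (one_sub_div_pos hα₀ hpα₀) (one_sub_div_pos hα (hpα₀.trans_le hα₀α))
      (by gcongr)
  have hlog : log α₀ ≤ log α := log_le_log hα₀ hα₀α
  have hβ : α / p ≤ β / p := by gcongr
  have hbracket : α / p ≤ log (α * s) - 1 + digamma (1 - p / α) := by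
    rw [log_mul hα.ne' hs.ne']
    linarith
  calc (0 : ℝ) = p / α ^ 2 * (α / p) - α⁻¹ := by field_simp; ring
    _ ≤ _ := by gcongr

lemma monotoneOn_logLambda {p s α₀ β : ℝ} (hp : 0 < p) (hs : 0 < s) (hpα₀ : p < α₀)
    (hs_large : 1 + β / p - log α₀ - digamma (1 - p / α₀) ≤ log s) :
    MonotoneOn (logLambda p s) (Icc α₀ β) := by
  have hderiv : ∀ α ∈ Icc α₀ β, HasDerivAt (logLambda p s)
      (p / α ^ 2 * (log (α * s) - 1 + digamma (1 - p / α)) - α⁻¹) α :=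
    fun α hα => hasDerivAt_logLambda hs (hp.trans (hpα₀.trans_le hα.1)) (hpα₀.trans_le hα.1)
  refine monotoneOn_of_deriv_nonneg (convex_Icc α₀ β)
    (fun α hα => (hderiv α hα).continuousAt.continuousWithinAt) ?_ ?_
  · rw [interior_Icc]
    exact fun α hα => (hderiv α (Ioo_subset_Icc_self hα)).differentiableAt.differentiableWithinAt
  · rw [interior_Icc]
    intro α hα
    rw [(hderiv α (Ioo_subset_Icc_self hα)).deriv]
    exact logLambda_deriv_nonneg hp hs hpα₀ hs_large hα.1.le hα.2.le

theorem stmt_12_general (p σ α₀ : ℝ) (hp1 : 1 ≤ p)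
    (hα₀ : α₀ ∈ Set.Ioo p 2)
    (hσ2 : σ ^ 2 ≥ Real.exp (1 + 2 / p - Real.log α₀ - digamma (1 - p / α₀)))
    (α₁ α₂ : ℝ) (h1 : α₀ ≤ α₁) (h12 : α₁ < α₂) (h2 : α₂ < 2) :
    (1 / α₁) * (1 / (α₁ * σ ^ 2)) ^ (p / α₁) * Real.Gamma (1 - p / α₁)
      ≤ (1 / α₂) * (1 / (α₂ * σ ^ 2)) ^ (p / α₂) * Real.Gamma (1 - p / α₂) := by
  have hp : 0 < p := one_pos.trans_le hp1
  have hs : 0 < σ ^ 2 := (exp_pos _).trans_le hσ2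
  have hα₁ : p < α₁ := hα₀.1.trans_le h1
  have hmono := monotoneOn_logLambda hp hs hα₀.1 ((le_log_iff_exp_le hs).mpr hσ2)
  rw [← exp_logLambda hs (hp.trans hα₁) hα₁,
    ← exp_logLambda hs (hp.trans (hα₁.trans h12)) (hα₁.trans h12), exp_le_exp]
  exact hmono ⟨h1, (h12.trans h2).le⟩ ⟨h1.trans h12.le, h2.le⟩ h12.le

theorem stmt_12 (p σ α₀ : ℝ) (hp1 : 1 ≤ p) (hp2 : p < 2) (hσ : 0 < σ)
    (hα₀ : α₀ ∈ Set.Ioo p 2)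
    (hσ2 : σ ^ 2 ≥ Real.exp (1 + 2 / p - Real.log α₀ - digamma (1 - p / α₀)))
    (α₁ α₂ : ℝ) (h1 : α₀ ≤ α₁) (h12 : α₁ < α₂) (h2 : α₂ < 2) :
    (1 / α₁) * (1 / (α₁ * σ ^ 2)) ^ (p / α₁) * Real.Gamma (1 - p / α₁)
      ≤ (1 / α₂) * (1 / (α₂ * σ ^ 2)) ^ (p / α₂) * Real.Gamma (1 - p / α₂) :=
  stmt_12_general p σ α₀ hp1 hα₀ hσ2 α₁ α₂ h1 h12 h2
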